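/- Let γ ∈ [0,1), T, N, n_e ∈ ℕ with n_e < N, vectors x_{t,i} ∈ ℝ^p and ψ_t, ψ̂_t ∈ ℝ^p for t ∈ [T], i ∈ {n_e+1,…,N}, and set â_{t,i} = sgn(x_{t,i}ᵀψ̂_t), a*_{t,i} = sgn(x_{t,i}ᵀψ_t) (with sgn(0) := 1). Then the exploitation-phase cumulative regret satisfies Σ_{i=n_e+1}^{N} Σ_{t=1}^{T} γ^t·( a*_{t,i}·x_{t,i}ᵀψ_t − â_{t,i}·x_{t,i}ᵀψ_t ) ≤ 2·(N − n_e)·(γ/(1−γ))·( max_{t,i} ‖x_{t,i}‖₂ )·( max_{t∈[T]} ‖ψ̂_t − ψ_t‖₂ ). -/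
import Mathlib


open Finset

/-- The sign function with the convention `sgn 0 = 1`. -/
noncomputable def sgn (v : ℝ) : ℝ := if v < 0 then -1 else 1

/-- Euclidean dot product on `Fin p → ℝ`. -/
def dot {p : ℕ} (u v : Fin p → ℝ) : ℝ := ∑ j, u j * v j

/-- Euclidean (ℓ₂) norm on `Fin p → ℝ`. -/
noncomputable def l2norm {p : ℕ} (u : Fin p → ℝ) : ℝ := Real.sqrt (∑ j, u j ^ 2)

lemma sgn_mul_self (v : ℝ) : sgn v * v = |v| := by
  unfold sgn
  rcases lt_or_ge v 0 with h | h
  · rw [if_pos h, abs_of_neg h]; ring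
  · rw [if_neg (not_lt.2 h), abs_of_nonneg h]; ring

lemma sgn_mul_le (a v : ℝ) (ha : a = -1 ∨ a = 1) : a * v ≤ sgn v * v := by
  rw [sgn_mul_self]
  rcases ha with h | h <;> simp [h, neg_le_abs, le_abs_self]

lemma abs_dot_le {p : ℕ} (u v : Fin p → ℝ) : |dot u v| ≤ l2norm u * l2norm v := by
  have h1 : dot u v ≤ l2norm u * l2norm v :=
    Real.sum_mul_le_sqrt_mul_sqrt _ u v
  have h2 : dot u (-v) ≤ l2norm u * l2norm (-v) :=
    Real.sum_mul_le_sqrt_mul_sqrt _ u (-v)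
  have hneg : l2norm (-v : Fin p → ℝ) = l2norm v := by
    unfold l2norm; congr 1; apply Finset.sum_congr rfl; intro j _; simp
  have hdn : dot u (-v) = -dot u v := by
    unfold dot; rw [← Finset.sum_neg_distrib]; apply Finset.sum_congr rfl; intro j _; simp
  rw [hneg, hdn] at h2
  exact abs_le.2 ⟨by linarith, h1⟩

lemma per_step {p : ℕ} (x ψ ψh : Fin p → ℝ) :
    sgn (dot x ψ) * dot x ψ - sgn (dot x ψh) * dot x ψ ≤ 2 * (l2norm x * l2norm (ψh - ψ)) := by
  have hd : dot x (ψh - ψ) = dot x ψh - dot x ψ := by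
    unfold dot; rw [← Finset.sum_sub_distrib]; apply Finset.sum_congr rfl; intro j _
    simp [Pi.sub_apply]; ring
  have hCS := abs_dot_le x (ψh - ψ)
  rw [hd] at hCS
  have h1 : sgn (dot x ψ) * dot x ψ = |dot x ψ| := sgn_mul_self _
  have h2 : sgn (dot x ψh) * dot x ψh = |dot x ψh| := sgn_mul_self _
  have h3 : sgn (dot x ψ) * dot x ψh ≤ sgn (dot x ψh) * dot x ψh := by
    apply sgn_mul_le; unfold sgn; split <;> simp
  have h4 := abs_le.1 hCS
  have h5 : |dot x ψ| ≤ |dot x ψh| + |dot x ψh - dot x ψ| := by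
    calc |dot x ψ| = |dot x ψh - (dot x ψh - dot x ψ)| := by ring_nf
      _ ≤ |dot x ψh| + |dot x ψh - dot x ψ| := abs_sub _ _
  have h6 : sgn (dot x ψh) * (dot x ψh - dot x ψ) ≤ |dot x ψh - dot x ψ| := by
    rcases (by unfold sgn; split <;> simp : sgn (dot x ψh) = -1 ∨ sgn (dot x ψh) = 1) with h | h <;>
      rw [h] <;>
      linarith [neg_abs_le (dot x ψh - dot x ψ), le_abs_self (dot x ψh - dot x ψ)]
  have : sgn (dot x ψh) * dot x ψ = sgn (dot x ψh) * dot x ψh - sgn (dot x ψh) * (dot x ψh - dot x ψ) := by ring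
  rw [h1, this, h2]
  linarith [le_abs_self (dot x ψh - dot x ψ)]

/-- aggregating the per-step greedy-action regret bound
over the exploitation phase `i ∈ {n_e+1,…,N}`, `t ∈ {1,…,T}`, with discount `γ ∈ [0,1)`:
`∑_{i>n_e} ∑_t γ^t (a*_{t,i} x_{t,i}ᵀψ_t - â_{t,i} x_{t,i}ᵀψ_t)
  ≤ 2 (N - n_e) (γ/(1-γ)) (max_{t,i} ‖x_{t,i}‖₂)(max_t ‖ψ̂_t - ψ_t‖₂)`,
where the two maxima are expressed through upper bounds `Bx` and `Bψ`. -/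
theorem stmt_12 {p : ℕ} (γ : ℝ) (hγ0 : 0 ≤ γ) (hγ1 : γ < 1)
    (T N ne : ℕ) (hne : ne < N)
    (x : ℕ → ℕ → Fin p → ℝ) (ψ ψhat : ℕ → Fin p → ℝ)
    (Bx Bψ : ℝ) (hBx : 0 ≤ Bx) (hBψ : 0 ≤ Bψ)
    (hx : ∀ t ∈ Icc 1 T, ∀ i ∈ Ioc ne N, l2norm (x t i) ≤ Bx)
    (hψ : ∀ t ∈ Icc 1 T, l2norm (ψhat t - ψ t) ≤ Bψ) :
    ∑ i ∈ Ioc ne N, ∑ t ∈ Icc 1 T,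
        γ ^ t * (sgn (dot (x t i) (ψ t)) * dot (x t i) (ψ t)
          - sgn (dot (x t i) (ψhat t)) * dot (x t i) (ψ t))
      ≤ 2 * ((N - ne : ℕ) : ℝ) * (γ / (1 - γ)) * Bx * Bψ := by
  have hgeo : ∑ t ∈ Icc 1 T, γ ^ t ≤ γ / (1 - γ) := by
    rw [← Finset.Ico_add_one_right_eq_Icc]
    simpa using geom_sum_Ico_le_of_lt_one hγ0 hγ1 (m := 1) (n := T + 1)
  have hinner : ∀ i ∈ Ioc ne N,
      ∑ t ∈ Icc 1 T, γ ^ t * (sgn (dot (x t i) (ψ t)) * dot (x t i) (ψ t)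
          - sgn (dot (x t i) (ψhat t)) * dot (x t i) (ψ t))
        ≤ (γ / (1 - γ)) * (2 * Bx * Bψ) := by
    intro i hi
    calc ∑ t ∈ Icc 1 T, γ ^ t * (sgn (dot (x t i) (ψ t)) * dot (x t i) (ψ t)
          - sgn (dot (x t i) (ψhat t)) * dot (x t i) (ψ t))
        ≤ ∑ t ∈ Icc 1 T, γ ^ t * (2 * Bx * Bψ) := by
          apply Finset.sum_le_sum
          intro t ht
          apply mul_le_mul_of_nonneg_left _ (pow_nonneg hγ0 t)
          have h := per_step (x t i) (ψ t) (ψhat t)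
          have hxB := hx t ht i hi
          have hψB := hψ t ht
          have hxnn : 0 ≤ l2norm (x t i) := Real.sqrt_nonneg _
          have hψnn : 0 ≤ l2norm (ψhat t - ψ t) := Real.sqrt_nonneg _
          have : l2norm (x t i) * l2norm (ψhat t - ψ t) ≤ Bx * Bψ :=
            mul_le_mul hxB hψB hψnn hBx
          linarith
      _ = (∑ t ∈ Icc 1 T, γ ^ t) * (2 * Bx * Bψ) := by rw [← Finset.sum_mul]
      _ ≤ (γ / (1 - γ)) * (2 * Bx * Bψ) := by
          apply mul_le_mul_of_nonneg_right hgeo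
          positivity
  calc ∑ i ∈ Ioc ne N, ∑ t ∈ Icc 1 T, γ ^ t * (sgn (dot (x t i) (ψ t)) * dot (x t i) (ψ t)
          - sgn (dot (x t i) (ψhat t)) * dot (x t i) (ψ t))
      ≤ ∑ i ∈ Ioc ne N, (γ / (1 - γ)) * (2 * Bx * Bψ) := Finset.sum_le_sum hinner
    _ = ((N - ne : ℕ) : ℝ) * ((γ / (1 - γ)) * (2 * Bx * Bψ)) := by
        rw [Finset.sum_const, Nat.card_Ioc, nsmul_eq_mul]
    _ = 2 * ((N - ne : ℕ) : ℝ) * (γ / (1 - γ)) * Bx * Bψ := by ring
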